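/- Let s₁, s₂, …, s_p be odd positive integers (pairwise coprime). For a strict partition λ, the following are equivalent: (i) λ is an (s̄₁,…,s̄_p)-core; (ii) λ is an (s₁,…,s_p)-CSYD; (iii) the doubled distinct partition λλ is a doubled distinct (s₁,…,s_p)-core. In particular the three sets of such partitions coincide. -/

import Mathlib

/-- A strict partition, encoded as a strictly decreasing list of positive integers. -/
def IsStrictPartition (l : List ℕ) : Prop :=
  List.Pairwise (· > ·) l ∧ ∀ x ∈ l, 0 < x

/-- The set of bar lengths in the (0-indexed) `i`-th row of a strict partition `l`:
`{λᵢ + λⱼ : i < j ≤ ℓ} ∪ ({1,…,λᵢ} \ {λᵢ − λⱼ : i < j ≤ ℓ})`. -/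
def barLengths (l : List ℕ) (i : ℕ) : Finset ℕ :=
  ((Finset.Ioo i l.length).image fun j => l.getD i 0 + l.getD j 0) ∪
    (Finset.Icc 1 (l.getD i 0) \
      ((Finset.Ioo i l.length).image fun j => l.getD i 0 - l.getD j 0))

/-- `l` is an `s`-bar-core: `s` is not a bar length in any row. -/
def IsBarCore (l : List ℕ) (s : ℕ) : Prop :=
  ∀ i, i < l.length → s ∉ barLengths l i

/-- The shifted hook length of the box in row `i`, column `c` (both 0-indexed, where the
`i`-th row of the shifted Young diagram occupies columns `i, …, λᵢ + i − 1`): the number of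
boxes to its right in row `i` together with itself, plus the number of boxes below it in
column `c`, plus the number of boxes of row `c + 1` if that row exists. -/
def shiftedHook (l : List ℕ) (i c : ℕ) : ℕ :=
  (l.getD i 0 + i - c) +
    ((Finset.Ioc i c).filter fun i' => c < l.getD i' 0 + i').card +
    l.getD (c + 1) 0

/-- `l` is an `s`-CSYD: no shifted hook length of the shifted Young diagram `S(λ)`
is divisible by `s`. -/
def IsCSYD (l : List ℕ) (s : ℕ) : Prop :=
  ∀ i c, i < l.length → i ≤ c → c < l.getD i 0 + i → ¬ s ∣ shiftedHook l i c

/-- The `i`-th part (0-indexed) of the doubled distinct partition `λλ`, read off from the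
Frobenius symbol `(λ₁,…,λ_ℓ ; λ₁−1,…,λ_ℓ−1)`: for `i < ℓ` the part is `λᵢ + i + 1`
(1-indexed: `λᵢ + i`), and for `ℓ ≤ i` the part is determined by the column lengths
`λⱼ + j − 1` (1-indexed). -/
def ddPart (l : List ℕ) (i : ℕ) : ℕ :=
  if i < l.length then l.getD i 0 + i + 1
  else ((Finset.range l.length).filter fun j => i + 1 ≤ l.getD j 0 + j).card

/-- The doubled distinct partition `λλ` of a strict partition `l`, as a list of parts. -/
def doubledDistinct (l : List ℕ) : List ℕ :=
  (List.range (l.getD 0 0)).map (ddPart l)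

/-- Ordinary hook length of the box in row `i`, column `j` (0-indexed) of a partition `m`. -/
def hookLen (m : List ℕ) (i j : ℕ) : ℕ :=
  (m.getD i 0 - j) + ((Finset.Ioo i m.length).filter fun i' => j < m.getD i' 0).card

/-- `m` is an `s`-core: no hook length is divisible by `s`. -/
def IsCore (m : List ℕ) (s : ℕ) : Prop :=
  ∀ i j, i < m.length → j < m.getD i 0 → ¬ s ∣ hookLen m i j

/-- NE lattice paths from `(0,0)` to `(a,b)`, encoded as lists of steps where
`false` is an east step `E = (1,0)` and `true` is a north step `N = (0,1)`. -/
def NEPaths (a b : ℕ) : Set (List Bool) :=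
  {w | w.count false = a ∧ w.count true = b}

/-- A step of a free Motzkin path. -/
inductive MStep : Type
  | U : MStep
  | F : MStep
  | D : MStep
deriving DecidableEq

/-- The height change of a step: `U = (1,1)`, `F = (1,0)`, `D = (1,−1)`. -/
def MStep.ht : MStep → ℤ
  | .U => 1
  | .F => 0
  | .D => -1

/-- Free Motzkin paths of type `(p,q)`: lattice paths from `(0,0)` to `(p,q)` with steps
`U = (1,1)`, `F = (1,0)` and `D = (1,−1)`, encoded as lists of steps. -/
def FreeMotzkin (p : ℕ) (q : ℤ) : Set (List MStep) :=
  {w | w.length = p ∧ (w.map MStep.ht).sum = q}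

/-- `multinom n a b c = n! / (a! · b! · c!)`. -/
def multinom (n a b c : ℕ) : ℕ :=
  n.factorial / (a.factorial * b.factorial * c.factorial)
section Basics
variable {l : List ℕ}

lemma getD_zero {i : ℕ} (h : l.length ≤ i) : l.getD i 0 = 0 := List.getD_eq_default _ _ h

lemma pos_getD (hp : ∀ x ∈ l, 0 < x) {i : ℕ} (h : i < l.length) : 0 < l.getD i 0 := by
  rw [List.getD_eq_getElem _ _ h]; exact hp _ (List.getElem_mem h)

lemma strict_getD (hs : List.Pairwise (· > ·) l) {i j : ℕ} (hij : i < j) (hj : j < l.length) :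
    l.getD j 0 < l.getD i 0 := by
  rw [List.getD_eq_getElem _ _ hj, List.getD_eq_getElem _ _ (lt_trans hij hj)]
  exact List.Pairwise.rel_get_of_lt hs (by exact hij)

lemma chain_getD (hs : List.Pairwise (· > ·) l) :
    ∀ k i, i + k < l.length → l.getD (i + k) 0 + k ≤ l.getD i 0 := by
  intro k
  induction k with
  | zero => intro i h; simp
  | succ n ih =>
    intro i h
    have h1 := ih (i + 1) (by omega)
    have h2 : l.getD (i + 1) 0 < l.getD i 0 := strict_getD hs (by omega) (by omega)
    have : i + 1 + n = i + (n + 1) := by omega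
    rw [this] at h1
    omega

lemma mono_sum (hs : List.Pairwise (· > ·) l) {i j : ℕ} (hij : i ≤ j) (hj : j < l.length) :
    l.getD j 0 + j ≤ l.getD i 0 + i := by
  have := chain_getD hs (j - i) i (by omega)
  have hji : i + (j - i) = j := by omega
  rw [hji] at this; omega

lemma lower_getD (hs : List.Pairwise (· > ·) l) (hp : ∀ x ∈ l, 0 < x) {i : ℕ}
    (hi : i < l.length) : l.length ≤ l.getD i 0 + i := by
  have h1 := mono_sum hs (show i ≤ l.length - 1 by omega) (show l.length - 1 < l.length by omega)
  have h2 := pos_getD hp (show l.length - 1 < l.length by omega)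
  omega

lemma index_gt (hs : List.Pairwise (· > ·) l) {i j : ℕ} (hi : i < l.length) (hj : j < l.length)
    (h : l.getD j 0 < l.getD i 0) : i < j := by
  by_contra hc
  have := mono_sum hs (show j ≤ i by omega) hi
  omega
end Basics

section Bar
variable {l : List ℕ} {s : ℕ}

lemma mem_bar {i b : ℕ} :
    b ∈ barLengths l i ↔
      (∃ j, i < j ∧ j < l.length ∧ b = l.getD i 0 + l.getD j 0) ∨
      (1 ≤ b ∧ b ≤ l.getD i 0 ∧ ∀ j, i < j → j < l.length → b ≠ l.getD i 0 - l.getD j 0) := by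
  simp only [barLengths, Finset.mem_union, Finset.mem_image, Finset.mem_sdiff, Finset.mem_Icc,
    Finset.mem_Ioo, not_exists, not_and]
  constructor
  · rintro (⟨j, ⟨h1, h2⟩, h3⟩ | ⟨⟨h1, h2⟩, h3⟩)
    · exact Or.inl ⟨j, h1, h2, h3.symm⟩
    · exact Or.inr ⟨h1, h2, fun j hj1 hj2 hb => h3 j ⟨hj1, hj2⟩ hb.symm⟩
  · rintro (⟨j, h1, h2, h3⟩ | ⟨h1, h2, h3⟩)
    · exact Or.inl ⟨j, ⟨h1, h2⟩, h3.symm⟩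
    · exact Or.inr ⟨⟨h1, h2⟩, fun j hj hb => h3 j hj.1 hj.2 hb.symm⟩

lemma step1 (hs : List.Pairwise (· > ·) l) (hp : ∀ x ∈ l, 0 < x) (hbc : IsBarCore l s)
    (hspos : 0 < s) {i : ℕ} (hi : i < l.length) (hle : s ≤ l.getD i 0) :
    s < l.getD i 0 ∧ ∃ j, j < l.length ∧ l.getD j 0 = l.getD i 0 - s := by
  have h := hbc i hi
  rw [mem_bar] at h
  push_neg at h
  obtain ⟨j, hj1, hj2, hj3⟩ := h.2 hspos hle
  have h4 : l.getD j 0 < l.getD i 0 := strict_getD hs hj1 hj2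
  have h5 := pos_getD hp hj2
  exact ⟨by omega, j, hj2, by omega⟩

lemma stepk (hs : List.Pairwise (· > ·) l) (hp : ∀ x ∈ l, 0 < x) (hbc : IsBarCore l s)
    (hspos : 0 < s) : ∀ k, 0 < k → ∀ i, i < l.length → k * s ≤ l.getD i 0 →
    k * s < l.getD i 0 ∧ ∃ j, j < l.length ∧ l.getD j 0 = l.getD i 0 - k * s := by
  intro k
  induction k with
  | zero => omega
  | succ n ih =>
    intro _ i hi hle
    rcases Nat.eq_zero_or_pos n with hn | hn
    · subst hn; simpa using step1 hs hp hbc hspos hi (by omega)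
    · have hmul : (n + 1) * s = n * s + s := by ring
      obtain ⟨h1, j, hj, hjv⟩ := ih hn i hi (by omega)
      have hsle : s ≤ l.getD j 0 := by omega
      obtain ⟨h2, j', hj', hj'v⟩ := step1 hs hp hbc hspos hj hsle
      refine ⟨by omega, j', hj', by omega⟩

lemma no_multiple (hs : List.Pairwise (· > ·) l) (hp : ∀ x ∈ l, 0 < x) (hbc : IsBarCore l s)
    (hspos : 0 < s) {m i : ℕ} (hm : 0 < m) (hi : i < l.length) :
    l.getD i 0 ≠ m * s := by
  intro h
  have := stepk hs hp hbc hspos m hm i hi (le_of_eq h.symm)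
  omega

lemma no_sum (hs : List.Pairwise (· > ·) l) (hp : ∀ x ∈ l, 0 < x) (hbc : IsBarCore l s)
    (hspos : 0 < s) (hodd : Odd s) : ∀ k i j, i < l.length → j < l.length →
    l.getD j 0 < l.getD i 0 → l.getD i 0 + l.getD j 0 ≠ (k + 1) * s := by
  intro k
  induction k with
  | zero =>
    intro i j hi hj hlt heq
    have hij : i < j := index_gt hs hi hj hlt
    have := hbc i hi
    rw [mem_bar] at this
    exact this (Or.inl ⟨j, hij, hj, by omega⟩)
  | succ n ih =>
    intro i j hi hj hlt heq
    have hxs : s < l.getD i 0 := by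
      have hy := pos_getD hp hj
      nlinarith
    obtain ⟨_, j', hj', hj'v⟩ := step1 hs hp hbc hspos hi (le_of_lt hxs)
    by_cases hsame : l.getD j' 0 = l.getD j 0
    · -- 2 * g j = (n+1) * s
      have h2y : 2 * l.getD j 0 = (n + 1) * s := by
        have : (n + 1 + 1) * s = (n + 1) * s + s := by ring
        omega
      have h2 : (2 : ℕ) ∣ (n + 1) := by
        have h2' : (2 : ℕ) ∣ (n + 1) * s := ⟨l.getD j 0, by omega⟩
        exact (hodd.coprime_two_left).dvd_of_dvd_mul_right h2'
      obtain ⟨m, hm⟩ := h2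
      have h2y' : (n + 1) * s = 2 * (m * s) := by rw [hm]; ring
      have hy : l.getD j 0 = m * s := by omega
      have hmpos : 0 < m := by
        have := pos_getD hp hj
        rcases Nat.eq_zero_or_pos m with h | h
        · exfalso; subst h; simp at hy; omega
        · exact h
      exact no_multiple hs hp hbc hspos hmpos hj hy
    · have hsum : l.getD j' 0 + l.getD j 0 = (n + 1) * s := by
        have : (n + 1 + 1) * s = (n + 1) * s + s := by ring
        omega
      rcases lt_or_gt_of_ne hsame with h | h
      · exact ih j j' hj hj' h (by omega)
      · exact ih j' j hj' hj h hsum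

lemma bar_not_dvd (hs : List.Pairwise (· > ·) l) (hp : ∀ x ∈ l, 0 < x) (hbc : IsBarCore l s)
    (hspos : 0 < s) (hodd : Odd s) {i b : ℕ} (hi : i < l.length)
    (hb : b ∈ barLengths l i) : ¬ s ∣ b := by
  rintro ⟨k, rfl⟩
  rw [show s * k = k * s from mul_comm s k, mem_bar] at hb
  rcases hb with ⟨j, hj1, hj2, hj3⟩ | ⟨h1, h2, h3⟩
  · have hlt : l.getD j 0 < l.getD i 0 := strict_getD hs hj1 hj2
    have hk : 0 < k := by
      have := pos_getD hp hi
      have := pos_getD hp hj2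
      rcases Nat.eq_zero_or_pos k with h | h
      · exfalso; subst h; rw [zero_mul] at hj3; omega
      · exact h
    exact no_sum hs hp hbc hspos hodd (k - 1) i j hi hj2 hlt
      (by rw [show k - 1 + 1 = k from by omega]; exact hj3.symm)
  · have hk : 0 < k := by
      rcases Nat.eq_zero_or_pos k with h | h
      · exfalso; subst h; simp at h1
      · exact h
    obtain ⟨hlt, j, hj, hjv⟩ := stepk hs hp hbc hspos k hk i hi h2
    have hji : i < j := index_gt hs hi hj (by omega)
    exact h3 j hji hj (by omega)
end Bar

section Shifted
variable {l : List ℕ} {s : ℕ}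

lemma shiftedHook_high {i c : ℕ} (hc : l.length ≤ c + 1) (hle : i ≤ c) :
    shiftedHook l i c =
      l.getD i 0 + i - c + ((Finset.Ioo i l.length).filter fun j => c < l.getD j 0 + j).card := by
  have hfilter : (Finset.Ioc i c).filter (fun i' => c < l.getD i' 0 + i') =
      (Finset.Ioo i l.length).filter (fun j => c < l.getD j 0 + j) := by
    apply Finset.ext
    intro x
    simp only [Finset.mem_filter, Finset.mem_Ioc, Finset.mem_Ioo]
    constructor
    · rintro ⟨⟨h1, h2⟩, h3⟩
      refine ⟨⟨h1, ?_⟩, h3⟩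
      by_contra hx
      rw [getD_zero (by omega)] at h3
      omega
    · rintro ⟨⟨h1, h2⟩, h3⟩
      exact ⟨⟨h1, by omega⟩, h3⟩
  unfold shiftedHook
  rw [hfilter, show l.getD (c + 1) 0 = 0 from getD_zero (by omega), add_zero]

lemma shiftedHook_low (hs : List.Pairwise (· > ·) l) (hp : ∀ x ∈ l, 0 < x) {i c : ℕ}
    (hic : i ≤ c) (hc : c + 1 < l.length) :
    shiftedHook l i c = l.getD i 0 + l.getD (c + 1) 0 := by
  unfold shiftedHook
  have hfull : (Finset.Ioc i c).filter (fun i' => c < l.getD i' 0 + i') = Finset.Ioc i c := by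
    apply Finset.filter_true_of_mem
    intro x hx
    rw [Finset.mem_Ioc] at hx
    have h1 := mono_sum hs (show x ≤ c + 1 by omega) hc
    have h2 := pos_getD hp hc
    omega
  rw [hfull, Nat.card_Ioc]
  have hlow := lower_getD hs hp (show i < l.length by omega)
  omega

lemma shiftedHook_mem_bar_high (hs : List.Pairwise (· > ·) l) (hp : ∀ x ∈ l, 0 < x) {i c : ℕ}
    (hi : i < l.length) (hic : i ≤ c) (hc1 : l.length ≤ c + 1) (hc2 : c < l.getD i 0 + i) :
    shiftedHook l i c ∈ barLengths l i := by
  set T := (Finset.Ico i l.length).filter (fun j => c < l.getD j 0 + j) with hT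
  have hTne : T.Nonempty := ⟨i, by
    rw [hT, Finset.mem_filter, Finset.mem_Ico]
    exact ⟨⟨le_refl i, hi⟩, hc2⟩⟩
  set J := T.max' hTne with hJdef
  have hJT : J ∈ T := T.max'_mem hTne
  rw [hT, Finset.mem_filter, Finset.mem_Ico] at hJT
  obtain ⟨⟨hJ1, hJ2⟩, hJ3⟩ := hJT
  have hmax : ∀ j ∈ T, j ≤ J := fun j hj => T.le_max' j hj
  have hfilter : (Finset.Ioo i l.length).filter (fun j => c < l.getD j 0 + j) =
      Finset.Ioc i J := by
    apply Finset.ext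
    intro x
    simp only [Finset.mem_filter, Finset.mem_Ioo, Finset.mem_Ioc]
    constructor
    · rintro ⟨⟨h1, h2⟩, h3⟩
      refine ⟨h1, hmax x ?_⟩
      rw [hT, Finset.mem_filter, Finset.mem_Ico]
      exact ⟨⟨by omega, h2⟩, h3⟩
    · rintro ⟨h1, h2⟩
      have hxlen : x < l.length := by omega
      have := mono_sum hs h2 hJ2
      exact ⟨⟨h1, hxlen⟩, by omega⟩
  rw [shiftedHook_high hc1 hic, hfilter, Nat.card_Ioc]
  have hJle : l.getD J 0 + J ≤ l.getD i 0 + i := mono_sum hs hJ1 hJ2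
  rw [mem_bar]
  right
  refine ⟨by omega, by omega, ?_⟩
  intro j' hj'1 hj'2 heq
  have hj'lt : l.getD j' 0 < l.getD i 0 := strict_getD hs hj'1 hj'2
  by_cases hcase : j' ≤ J
  · have := mono_sum hs hcase hJ2
    omega
  · have hj'T : j' ∉ T := by
      intro hmem
      exact hcase (hmax j' hmem)
    rw [hT, Finset.mem_filter, Finset.mem_Ico] at hj'T
    push_neg at hj'T
    have := hj'T ⟨by omega, hj'2⟩
    omega

lemma bar_high_eq_shiftedHook (hs : List.Pairwise (· > ·) l) (hp : ∀ x ∈ l, 0 < x) {i v : ℕ}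
    (hi : i < l.length) (hv1 : 1 ≤ v) (hv2 : v ≤ l.getD i 0)
    (hnd : ∀ j, i < j → j < l.length → v ≠ l.getD i 0 - l.getD j 0) :
    ∃ c, i ≤ c ∧ l.length ≤ c + 1 ∧ c < l.getD i 0 + i ∧ shiftedHook l i c = v := by
  set T := (Finset.Ico i l.length).filter (fun j => l.getD i 0 < l.getD j 0 + v) with hT
  have hTne : T.Nonempty := ⟨i, by
    rw [hT, Finset.mem_filter, Finset.mem_Ico]
    exact ⟨⟨le_refl i, hi⟩, by omega⟩⟩
  set J := T.max' hTne with hJdef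
  have hJT : J ∈ T := T.max'_mem hTne
  rw [hT, Finset.mem_filter, Finset.mem_Ico] at hJT
  obtain ⟨⟨hJ1, hJ2⟩, hJ3⟩ := hJT
  have hmax : ∀ j ∈ T, j ≤ J := fun j hj => T.le_max' j hj
  have hJle : l.getD J 0 + J ≤ l.getD i 0 + i := mono_sum hs hJ1 hJ2
  set c := l.getD i 0 + J - v with hc
  have hic : i ≤ c := by omega
  have hclt : c < l.getD i 0 + i := by omega
  -- next index property
  have hnext : J + 1 < l.length → l.getD (J + 1) 0 + v + 1 ≤ l.getD i 0 := by
    intro hJ1len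
    have hnT : J + 1 ∉ T := by
      intro hmem
      have := hmax (J + 1) hmem
      omega
    rw [hT, Finset.mem_filter, Finset.mem_Ico] at hnT
    push_neg at hnT
    have h1 := hnT ⟨by omega, hJ1len⟩
    have h2 := hnd (J + 1) (by omega) hJ1len
    have h3 : l.getD (J + 1) 0 < l.getD i 0 := strict_getD hs (by omega) hJ1len
    omega
  have hlen : l.length ≤ c + 1 := by
    by_cases hJ1len : J + 1 < l.length
    · have h1 := hnext hJ1len
      have h2 := lower_getD hs hp hJ1len
      omega
    · omega
  refine ⟨c, hic, hlen, hclt, ?_⟩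
  rw [shiftedHook_high hlen hic]
  have hfilter : (Finset.Ioo i l.length).filter (fun j => c < l.getD j 0 + j) =
      Finset.Ioc i J := by
    apply Finset.ext
    intro x
    simp only [Finset.mem_filter, Finset.mem_Ioo, Finset.mem_Ioc]
    constructor
    · rintro ⟨⟨h1, h2⟩, h3⟩
      refine ⟨h1, ?_⟩
      by_contra hx
      push_neg at hx
      have hJ1len : J + 1 < l.length := by omega
      have h4 := hnext hJ1len
      have h5 := mono_sum hs (show J + 1 ≤ x by omega) h2
      omega
    · rintro ⟨h1, h2⟩
      have hxlen : x < l.length := by omega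
      have := mono_sum hs h2 hJ2
      exact ⟨⟨h1, hxlen⟩, by omega⟩
  rw [hfilter, Nat.card_Ioc]
  omega

/-- Every valid shifted hook is a bar length of its row. -/
lemma shiftedHook_mem_bar (hs : List.Pairwise (· > ·) l) (hp : ∀ x ∈ l, 0 < x) {i c : ℕ}
    (hi : i < l.length) (hic : i ≤ c) (hc : c < l.getD i 0 + i) :
    shiftedHook l i c ∈ barLengths l i := by
  by_cases hcase : c + 1 < l.length
  · rw [shiftedHook_low hs hp hic hcase, mem_bar]
    exact Or.inl ⟨c + 1, by omega, hcase, rfl⟩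
  · exact shiftedHook_mem_bar_high hs hp hi hic (by omega) hc

/-- Every bar length is a valid shifted hook of its row. -/
lemma bar_eq_shiftedHook (hs : List.Pairwise (· > ·) l) (hp : ∀ x ∈ l, 0 < x) {i b : ℕ}
    (hi : i < l.length) (hb : b ∈ barLengths l i) :
    ∃ c, i ≤ c ∧ c < l.getD i 0 + i ∧ shiftedHook l i c = b := by
  rw [mem_bar] at hb
  rcases hb with ⟨j, hj1, hj2, rfl⟩ | ⟨h1, h2, h3⟩
  · refine ⟨j - 1, by omega, ?_, ?_⟩
    · have := lower_getD hs hp hi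
      omega
    · have hj' : j - 1 + 1 = j := by omega
      have hc := shiftedHook_low hs hp (show i ≤ j - 1 by omega)
        (show (j - 1) + 1 < l.length by rw [hj']; exact hj2)
      rw [hj'] at hc
      exact hc
  · obtain ⟨c, hc1, hc2, hc3, hc4⟩ := bar_high_eq_shiftedHook hs hp hi h1 h2 h3
    exact ⟨c, hc1, hc3, hc4⟩
end Shifted

section Equiv1
variable {l : List ℕ} {s : ℕ}

lemma barCore_iff_CSYD (hs : List.Pairwise (· > ·) l) (hp : ∀ x ∈ l, 0 < x)
    (hspos : 0 < s) (hodd : Odd s) : IsBarCore l s ↔ IsCSYD l s := by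
  constructor
  · intro hbc i c hi hic hc hdvd
    exact bar_not_dvd hs hp hbc hspos hodd hi (shiftedHook_mem_bar hs hp hi hic hc) hdvd
  · intro hcsyd i hi hmem
    obtain ⟨c, hc1, hc2, hc3⟩ := bar_eq_shiftedHook hs hp hi hmem
    exact hcsyd i c hi hc1 hc2 (hc3 ▸ dvd_refl s)
end Equiv1

section DD
variable {l : List ℕ} {s : ℕ}

lemma dd_length : (doubledDistinct l).length = l.getD 0 0 := by
  simp [doubledDistinct]

lemma dd_getD {i : ℕ} (h : i < l.getD 0 0) : (doubledDistinct l).getD i 0 = ddPart l i := by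
  have hlen : i < (doubledDistinct l).length := by rw [dd_length]; exact h
  rw [List.getD_eq_getElem _ _ hlen]
  simp [doubledDistinct]

/-- Initial segment lemma. -/
lemma ISL (hs : List.Pairwise (· > ·) l) {j v : ℕ} (hj : j < l.length) :
    (j < ((Finset.range l.length).filter fun j' => v ≤ l.getD j' 0 + j').card) ↔
      v ≤ l.getD j 0 + j := by
  constructor
  · intro h
    by_contra hc
    push_neg at hc
    have hsub : ((Finset.range l.length).filter fun j' => v ≤ l.getD j' 0 + j') ⊆
        Finset.range j := by
      intro x hx
      rw [Finset.mem_filter, Finset.mem_range] at hx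
      rw [Finset.mem_range]
      by_contra hxj
      push_neg at hxj
      have := mono_sum hs hxj hx.1
      omega
    have := Finset.card_le_card hsub
    rw [Finset.card_range] at this
    omega
  · intro h
    have hsub : Finset.range (j + 1) ⊆
        (Finset.range l.length).filter fun j' => v ≤ l.getD j' 0 + j' := by
      intro x hx
      rw [Finset.mem_range] at hx
      rw [Finset.mem_filter, Finset.mem_range]
      have hxlen : x < l.length := by omega
      have := mono_sum hs (show x ≤ j by omega) hj
      exact ⟨hxlen, by omega⟩
    have := Finset.card_le_card hsub
    rw [Finset.card_range] at this
    omega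

lemma dd_col (hs : List.Pairwise (· > ·) l) (hp : ∀ x ∈ l, 0 < x) {j i' : ℕ}
    (hj : j < l.length) : (j < ddPart l i') ↔ i' < l.getD j 0 + j := by
  unfold ddPart
  split_ifs with h
  · constructor
    · intro _
      have := lower_getD hs hp hj
      omega
    · intro _
      by_cases hij : i' ≤ j
      · have := mono_sum hs hij hj
        have := pos_getD hp hj
        omega
      · omega
  · exact ISL hs hj

lemma dd_ge_len {i' : ℕ} (h : ¬ i' < l.length) : ddPart l i' ≤ l.length := by
  unfold ddPart
  rw [if_neg h]
  calc ((Finset.range l.length).filter fun j => i' + 1 ≤ l.getD j 0 + j).card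
      ≤ (Finset.range l.length).card := Finset.card_le_card (Finset.filter_subset _ _)
    _ = l.length := Finset.card_range _

lemma len_le_L (hs : List.Pairwise (· > ·) l) (hp : ∀ x ∈ l, 0 < x) (hne : 0 < l.length) :
    l.length ≤ l.getD 0 0 := by
  have := lower_getD hs hp hne
  omega

/-- Leg count for columns `j < ℓ`. -/
lemma dd_leg (hs : List.Pairwise (· > ·) l) (hp : ∀ x ∈ l, 0 < x) {i j : ℕ}
    (hj : j < l.length) (hcell : i < l.getD j 0 + j) :
    ((Finset.Ioo i (doubledDistinct l).length).filter
        fun i' => j < (doubledDistinct l).getD i' 0).card = l.getD j 0 + j - (i + 1) := by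
  have hL : l.length ≤ l.getD 0 0 := len_le_L hs hp (by omega)
  have hjL : l.getD j 0 + j ≤ l.getD 0 0 := by
    have := mono_sum hs (Nat.zero_le j) hj
    omega
  have hfilter : (Finset.Ioo i (doubledDistinct l).length).filter
      (fun i' => j < (doubledDistinct l).getD i' 0) = Finset.Ioo i (l.getD j 0 + j) := by
    apply Finset.ext
    intro x
    rw [Finset.mem_filter, Finset.mem_Ioo, Finset.mem_Ioo, dd_length]
    constructor
    · rintro ⟨⟨h1, h2⟩, h3⟩
      rw [dd_getD h2, dd_col hs hp hj] at h3
      exact ⟨h1, h3⟩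
    · rintro ⟨h1, h2⟩
      have hxL : x < l.getD 0 0 := by omega
      refine ⟨⟨h1, hxL⟩, ?_⟩
      rw [dd_getD hxL, dd_col hs hp hj]
      exact h2
  rw [hfilter, Nat.card_Ioo]; omega
end DD

section Hooks
variable {l : List ℕ} {s : ℕ}

lemma ddPart_lt {i : ℕ} (h : i < l.length) : ddPart l i = l.getD i 0 + i + 1 := by
  unfold ddPart; rw [if_pos h]

/-- Hook lengths in the region `i < ℓ`, `j < ℓ`. -/
lemma hook_both_low (hs : List.Pairwise (· > ·) l) (hp : ∀ x ∈ l, 0 < x) {i j : ℕ}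
    (hi : i < l.length) (hj : j < l.length) :
    hookLen (doubledDistinct l) i j = l.getD i 0 + l.getD j 0 := by
  have hL := len_le_L hs hp (by omega)
  have hiL : i < l.getD 0 0 := by omega
  have hcell : i < l.getD j 0 + j := by
    have := lower_getD hs hp hj; omega
  have hji : j < l.getD i 0 + i := by
    have := lower_getD hs hp hi; omega
  unfold hookLen
  rw [dd_leg hs hp hj hcell, dd_getD hiL, ddPart_lt hi]
  omega

/-- Hook lengths in the region `j < ℓ ≤ i`. -/
lemma hook_highrow (hs : List.Pairwise (· > ·) l) (hp : ∀ x ∈ l, 0 < x) {i j : ℕ}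
    (hj : j < l.length) (hilen : l.length ≤ i) (hiL : i < l.getD 0 0)
    (hcell : j < ddPart l i) :
    hookLen (doubledDistinct l) i j = shiftedHook l j i ∧
      shiftedHook l j i ∈ barLengths l j := by
  have hcol : i < l.getD j 0 + j := (dd_col hs hp hj).mp hcell
  constructor
  · unfold hookLen
    rw [dd_leg hs hp hj hcol, dd_getD hiL]
    rw [shiftedHook_high (by omega) (by omega)]
    unfold ddPart
    rw [if_neg (by omega)]
    -- split the range
    have hsplit : Finset.range l.length = Finset.range (j + 1) ∪ Finset.Ioo j l.length := by
      apply Finset.ext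
      intro x
      simp only [Finset.mem_union, Finset.mem_range, Finset.mem_Ioo]
      omega
    have hdisj : Disjoint (Finset.range (j + 1)) (Finset.Ioo j l.length) := by
      rw [Finset.disjoint_left]
      intro x hx1 hx2
      rw [Finset.mem_range] at hx1
      rw [Finset.mem_Ioo] at hx2
      omega
    rw [hsplit, Finset.filter_union,
      Finset.card_union_of_disjoint (Finset.disjoint_filter_filter hdisj)]
    have hfull : (Finset.range (j + 1)).filter (fun j' => i + 1 ≤ l.getD j' 0 + j') =
        Finset.range (j + 1) := by
      apply Finset.filter_true_of_mem
      intro x hx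
      rw [Finset.mem_range] at hx
      have := mono_sum hs (show x ≤ j by omega) hj
      omega
    have hsame : (Finset.Ioo j l.length).filter (fun j' => i + 1 ≤ l.getD j' 0 + j') =
        (Finset.Ioo j l.length).filter (fun j' => i < l.getD j' 0 + j') := by
      apply Finset.ext
      intro x
      simp only [Finset.mem_filter, Finset.mem_Ioo]
      omega
    rw [hfull, hsame, Finset.card_range]
    omega
  · exact shiftedHook_mem_bar_high hs hp hj (by omega) (by omega) hcol

/-- Hook lengths in the region `ℓ ≤ j`. -/
lemma hook_highcol (hs : List.Pairwise (· > ·) l) (hp : ∀ x ∈ l, 0 < x) {i j : ℕ}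
    (hiL : i < l.getD 0 0) (hjlen : l.length ≤ j)
    (hcell : j < (doubledDistinct l).getD i 0) :
    i < l.length ∧ hookLen (doubledDistinct l) i j = shiftedHook l i (j - 1) ∧
      shiftedHook l i (j - 1) ∈ barLengths l i := by
  rw [dd_getD hiL] at hcell
  have hilen : i < l.length := by
    by_contra hc
    have := dd_ge_len (l := l) (i' := i) hc
    omega
  have hlen0 : 0 < l.length := by omega
  rw [ddPart_lt hilen] at hcell
  have hji : i ≤ j - 1 := by omega
  have hlenj : l.length ≤ (j - 1) + 1 := by omega
  have hjgi : j - 1 < l.getD i 0 + i := by omega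
  refine ⟨hilen, ?_, shiftedHook_mem_bar_high hs hp hilen hji hlenj hjgi⟩
  unfold hookLen
  rw [dd_getD hiL, ddPart_lt hilen]
  rw [shiftedHook_high hlenj hji]
  have hfilter : (Finset.Ioo i (doubledDistinct l).length).filter
      (fun i' => j < (doubledDistinct l).getD i' 0) =
      (Finset.Ioo i l.length).filter (fun x => j - 1 < l.getD x 0 + x) := by
    apply Finset.ext
    intro x
    rw [Finset.mem_filter, Finset.mem_filter, Finset.mem_Ioo, Finset.mem_Ioo, dd_length]
    constructor
    · rintro ⟨⟨h1, h2⟩, h3⟩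
      rw [dd_getD h2] at h3
      by_cases hxlen : x < l.length
      · rw [ddPart_lt hxlen] at h3
        exact ⟨⟨h1, hxlen⟩, by omega⟩
      · have := dd_ge_len (l := l) (i' := x) hxlen
        omega
    · rintro ⟨⟨h1, h2⟩, h3⟩
      have hL := len_le_L hs hp hlen0
      have hxL : x < l.getD 0 0 := by omega
      refine ⟨⟨h1, hxL⟩, ?_⟩
      rw [dd_getD hxL, ddPart_lt h2]
      omega
  rw [hfilter]
  omega

lemma self_mem_bar (hs : List.Pairwise (· > ·) l) (hp : ∀ x ∈ l, 0 < x) {i : ℕ}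
    (hi : i < l.length) : l.getD i 0 ∈ barLengths l i := by
  rw [mem_bar]
  right
  refine ⟨pos_getD hp hi, le_refl _, ?_⟩
  intro j hj1 hj2
  have h1 := strict_getD hs hj1 hj2
  have h2 := pos_getD hp hj2
  omega

lemma barCore_iff_core (hs : List.Pairwise (· > ·) l) (hp : ∀ x ∈ l, 0 < x)
    (hspos : 0 < s) (hodd : Odd s) :
    IsBarCore l s ↔ IsCore (doubledDistinct l) s := by
  constructor
  · intro hbc i j hi hj hdvd
    rw [dd_length] at hi
    have hlen0 : 0 < l.length := by
      by_contra hc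
      rw [getD_zero (by omega)] at hi
      omega
    by_cases hjlen : j < l.length
    · by_cases hilen : i < l.length
      · rw [hook_both_low hs hp hilen hjlen] at hdvd
        rcases lt_trichotomy i j with h | h | h
        · exact bar_not_dvd hs hp hbc hspos hodd hilen
            (mem_bar.mpr (Or.inl ⟨j, h, hjlen, rfl⟩)) hdvd
        · subst h
          rw [show l.getD i 0 + l.getD i 0 = 2 * l.getD i 0 from by ring] at hdvd
          have hdvd' : s ∣ l.getD i 0 := (hodd.coprime_two_right).dvd_of_dvd_mul_left hdvd
          exact bar_not_dvd hs hp hbc hspos hodd hilen (self_mem_bar hs hp hilen) hdvd'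
        · rw [add_comm] at hdvd
          exact bar_not_dvd hs hp hbc hspos hodd hjlen
            (mem_bar.mpr (Or.inl ⟨i, h, hilen, rfl⟩)) hdvd
      · rw [dd_getD hi] at hj
        obtain ⟨heq, hmem⟩ := hook_highrow hs hp hjlen (by omega) hi hj
        rw [heq] at hdvd
        exact bar_not_dvd hs hp hbc hspos hodd hjlen hmem hdvd
    · obtain ⟨hilen, heq, hmem⟩ := hook_highcol hs hp hi (by omega) hj
      rw [heq] at hdvd
      exact bar_not_dvd hs hp hbc hspos hodd hilen hmem hdvd
  · intro hcore i hi hmem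
    have hlen0 : 0 < l.length := by omega
    have hL := len_le_L hs hp hlen0
    have hiL : i < l.getD 0 0 := by omega
    rw [mem_bar] at hmem
    rcases hmem with ⟨j, hj1, hj2, heq⟩ | ⟨h1, h2, h3⟩
    · refine hcore i j (by rw [dd_length]; exact hiL) ?_ ?_
      · rw [dd_getD hiL, ddPart_lt hi]
        have := lower_getD hs hp hi
        omega
      · rw [hook_both_low hs hp hi hj2, ← heq]
    · obtain ⟨c, hc1, hc2, hc3, hc4⟩ := bar_high_eq_shiftedHook hs hp hi h1 h2 h3
      refine hcore i (c + 1) (by rw [dd_length]; exact hiL) ?_ ?_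
      · rw [dd_getD hiL, ddPart_lt hi]
        omega
      · obtain ⟨_, heq, _⟩ := hook_highcol hs hp (j := c + 1) hiL (by omega)
          (by rw [dd_getD hiL, ddPart_lt hi]; omega)
        rw [heq, show c + 1 - 1 = c from by omega, hc4]
end Hooks

/-- For pairwise coprime odd positive integers `s₁,…,s_p` and a strict
partition `λ`, the following are equivalent: `λ` is an `(s̄₁,…,s̄_p)`-core; `λ` is an
`(s₁,…,s_p)`-CSYD; `λλ` is a doubled distinct `(s₁,…,s_p)`-core. -/
theorem odd_cores_coincide (p : ℕ) (s : Fin p → ℕ) (hpos : ∀ i, 0 < s i)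
    (hodd : ∀ i, Odd (s i)) (hcop : ∀ i j, i ≠ j → Nat.Coprime (s i) (s j))
    (l : List ℕ) (hl : IsStrictPartition l) :
    ((∀ i, IsBarCore l (s i)) ↔ (∀ i, IsCSYD l (s i))) ∧
    ((∀ i, IsBarCore l (s i)) ↔ (∀ i, IsCore (doubledDistinct l) (s i))) := by
  obtain ⟨hs, hp⟩ := hl
  constructor
  · constructor
    · intro h i
      exact (barCore_iff_CSYD hs hp (hpos i) (hodd i)).mp (h i)
    · intro h i
      exact (barCore_iff_CSYD hs hp (hpos i) (hodd i)).mpr (h i)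
  · constructor
    · intro h i
      exact (barCore_iff_core hs hp (hpos i) (hodd i)).mp (h i)
    · intro h i
      exact (barCore_iff_core hs hp (hpos i) (hodd i)).mpr (h i)
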